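/- Let (M, d) be a proper geodesic metric space and let γ be a line in M with the uniqueness property. If γ₁ and γ₂ are lines with γ₁ ≺ γ and γ₂ ≺ γ, and B_{γ₁}(x) ≥ B_{γ₂}(x) for all x ∈ M, then γ₁ ≺ γ₂. -/
import Mathlib


open Filter Topology

variable {M : Type*} [MetricSpace M]

/-- A ray in a metric space: a map `γ` defined (in effect) on `[0, ∞)` with
`d(γ s, γ t) = |s - t|` for all `s, t ≥ 0`. -/
def IsRay (γ : ℝ → M) : Prop :=
  ∀ s t : ℝ, 0 ≤ s → 0 ≤ t → dist (γ s) (γ t) = |s - t|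

/-- A line in a metric space: a map `γ : ℝ → M` with `d(γ s, γ t) = |s - t|`. -/
def IsLine (γ : ℝ → M) : Prop :=
  ∀ s t : ℝ, dist (γ s) (γ t) = |s - t|

/-- The Busemann function of a ray `γ`:
`b_γ(x) = lim_{t → ∞} (d(x, γ t) - t)`, which exists and equals the infimum
since `t ↦ d(x, γ t) - t` is nonincreasing on `[0, ∞)` and bounded below. -/
noncomputable def busemann (γ : ℝ → M) (x : M) : ℝ :=
  ⨅ t : Set.Ici (0 : ℝ), (dist x (γ t) - (t : ℝ))

/-- For a line `γ`, the negative ray `γ⁻(t) = γ(-t)`.  (The positive ray `γ⁺`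
is just `γ` itself, restricted to `[0, ∞)`.) -/
def negRay (γ : ℝ → M) : ℝ → M := fun t => γ (-t)

/-- The barrier function of a line `γ`: `B_γ = b_{γ⁺} + b_{γ⁻}`. -/
noncomputable def barrier (γ : ℝ → M) (x : M) : ℝ :=
  busemann γ x + busemann (negRay γ) x

/-- `γ' ≺ γ`: the barrier of `γ` vanishes at `γ' 0` and both Busemann functions
`b_{γ⁺}`, `b_{γ⁻}` calibrate `γ'` (every forward translate of `γ'` is a coray to
`γ⁺` and every backward translate is a coray to `γ⁻`). -/
def Prec (γ' γ : ℝ → M) : Prop :=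
  busemann γ (γ' 0) + busemann (negRay γ) (γ' 0) = 0 ∧
  ∀ t : ℝ, busemann γ (γ' t) = busemann γ (γ' 0) - t ∧
    busemann (negRay γ) (γ' t) = busemann (negRay γ) (γ' 0) + t

/-- A geodesic metric space: any two points are joined by a minimizing geodesic
segment. -/
def IsGeodesicSpace (M : Type*) [MetricSpace M] : Prop :=
  ∀ x y : M, ∃ σ : ℝ → M, σ 0 = x ∧ σ (dist x y) = y ∧
    ∀ s t : ℝ, s ∈ Set.Icc 0 (dist x y) → t ∈ Set.Icc 0 (dist x y) →
      dist (σ s) (σ t) = |s - t|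

/-- `γ'` is a coray to the ray `γ`: there are `tᵢ → ∞`, points `xᵢ → γ' 0` and
minimal geodesic segments `cᵢ` from `xᵢ` to `γ (tᵢ)` of length `Tᵢ = d(xᵢ, γ tᵢ) → ∞`
converging to `γ'` uniformly on compact subintervals of `[0, ∞)`. -/
def IsCoray (γ' γ : ℝ → M) : Prop :=
  ∃ (t : ℕ → ℝ) (x : ℕ → M) (c : ℕ → ℝ → M),
    (∀ i, 0 ≤ t i) ∧
    Tendsto t atTop atTop ∧
    Tendsto x atTop (𝓝 (γ' 0)) ∧
    (∀ i, c i 0 = x i) ∧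
    (∀ i, c i (dist (x i) (γ (t i))) = γ (t i)) ∧
    (∀ i, ∀ s s' : ℝ, s ∈ Set.Icc 0 (dist (x i) (γ (t i))) →
      s' ∈ Set.Icc 0 (dist (x i) (γ (t i))) → dist (c i s) (c i s') = |s - s'|) ∧
    Tendsto (fun i => dist (x i) (γ (t i))) atTop atTop ∧
    (∀ K > (0 : ℝ), ∀ ε > (0 : ℝ), ∃ N : ℕ, ∀ i ≥ N,
      ∀ s ∈ Set.Icc (0 : ℝ) K, dist (c i s) (γ' s) < ε)

/-- The line `γ` has the uniqueness property: through each point of the zero set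
of `B_γ` there is at most one line `γ''` with `γ'' ≺ γ`. -/
def HasUniqueCalibLine (γ : ℝ → M) : Prop :=
  ∀ x : M, barrier γ x = 0 →
    ∀ γ₁ γ₂ : ℝ → M, IsLine γ₁ → IsLine γ₂ → γ₁ 0 = x → γ₂ 0 = x →
      Prec γ₁ γ → Prec γ₂ γ → γ₁ = γ₂


section BusemannLemmas

variable {M : Type*} [MetricSpace M]

lemma dist_line (γ : ℝ → M) (hγ : IsLine γ) {s t : ℝ} (hst : s ≤ t) :
    dist (γ s) (γ t) = t - s := by
  rw [hγ s t, abs_of_nonpos (by linarith)]; ring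

lemma busemann_bddBelow (γ : ℝ → M) (hγ : IsLine γ) (x : M) :
    BddBelow (Set.range fun t : Set.Ici (0:ℝ) => dist x (γ t) - (t:ℝ)) := by
  refine ⟨-dist x (γ 0), ?_⟩
  rintro r ⟨⟨t, ht⟩, rfl⟩
  have h1 : dist (γ 0) (γ t) = t - 0 := dist_line γ hγ ht
  have h2 := dist_triangle (γ 0) x (γ t)
  have h3 := dist_comm (γ 0) x
  simp only []
  linarith

lemma busemann_le (γ : ℝ → M) (hγ : IsLine γ) (x : M) {t : ℝ} (ht : 0 ≤ t) :
    busemann γ x ≤ dist x (γ t) - t :=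
  ciInf_le (busemann_bddBelow γ hγ x) (⟨t, ht⟩ : Set.Ici (0:ℝ))

lemma le_busemann (γ : ℝ → M) (x : M) {c : ℝ}
    (h : ∀ t : ℝ, 0 ≤ t → c ≤ dist x (γ t) - t) : c ≤ busemann γ x := by
  haveI : Nonempty (Set.Ici (0:ℝ)) := ⟨⟨0, Set.mem_Ici.mpr le_rfl⟩⟩
  exact le_ciInf fun t => h t t.2

lemma busemann_lipschitz (γ : ℝ → M) (hγ : IsLine γ) (x y : M) :
    busemann γ x ≤ busemann γ y + dist x y := by
  rw [← sub_le_iff_le_add]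
  refine le_busemann γ y fun t ht => ?_
  have h1 := busemann_le γ hγ x ht
  have h2 := dist_triangle x y (γ t)
  linarith

lemma isLine_negRay (γ : ℝ → M) (hγ : IsLine γ) : IsLine (negRay γ) := by
  intro s t
  show dist (γ (-s)) (γ (-t)) = _
  rw [hγ (-s) (-t), show -s - -t = -(s - t) by ring, abs_neg]

lemma busemann_self (γ : ℝ → M) (hγ : IsLine γ) (s : ℝ) :
    busemann γ (γ s) = -s := by
  refine le_antisymm ?_ ?_
  · have h0 : (0:ℝ) ≤ max s 0 := le_max_right s 0
    have h1 := busemann_le γ hγ (γ s) h0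
    have hd : dist (γ s) (γ (max s 0)) = max s 0 - s := dist_line γ hγ (le_max_left s 0)
    rw [hd] at h1
    linarith
  · refine le_busemann γ (γ s) fun t ht => ?_
    have h := hγ s t
    have := abs_sub_le_iff.mp (le_of_eq (hγ s t).symm)
    linarith [this.2]

lemma busemann_negRay_self (γ : ℝ → M) (hγ : IsLine γ) (s : ℝ) :
    busemann (negRay γ) (γ s) = s := by
  have h := busemann_self (negRay γ) (isLine_negRay γ hγ) (-s)
  have h2 : negRay γ (-s) = γ s := by simp [negRay]
  rw [h2] at h
  rw [h]; ring

lemma barrier_nonneg (γ : ℝ → M) (hγ : IsLine γ) (x : M) :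
    0 ≤ busemann γ x + busemann (negRay γ) x := by
  have key : ∀ t : ℝ, 0 ≤ t → -(dist x (γ t) - t) ≤ busemann (negRay γ) x := by
    intro t ht
    refine le_busemann (negRay γ) x fun u hu => ?_
    have hd : dist (γ (-u)) (γ t) = t - (-u) := dist_line γ hγ (by linarith)
    have h2 := dist_triangle (γ (-u)) x (γ t)
    have h3 := dist_comm (γ (-u)) x
    show _ ≤ dist x (γ (-u)) - u
    linarith
  have h : -(busemann (negRay γ) x) ≤ busemann γ x := by
    refine le_busemann γ x fun t ht => ?_
    have := key t ht
    linarith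
  linarith

lemma barrier_self (γ : ℝ → M) (hγ : IsLine γ) (s : ℝ) :
    barrier γ (γ s) = 0 := by
  rw [barrier, busemann_self γ hγ s, busemann_negRay_self γ hγ s]; ring

lemma busemann_antitone (γ : ℝ → M) (hγ : IsLine γ) (x : M) {t t' : ℝ}
    (ht : 0 ≤ t) (htt' : t ≤ t') :
    dist x (γ t') - t' ≤ dist x (γ t) - t := by
  have hd : dist (γ t) (γ t') = t' - t := dist_line γ hγ htt'
  have := dist_triangle x (γ t) (γ t')
  linarith

end BusemannLemmas


section Construction

variable {M : Type*} [MetricSpace M]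

lemma busemann_lipschitzWith (γ : ℝ → M) (hγ : IsLine γ) :
    LipschitzWith 1 (busemann γ) := by
  refine LipschitzWith.of_dist_le_mul fun a b => ?_
  rw [Real.dist_eq, NNReal.coe_one, one_mul]
  have h1 := busemann_lipschitz γ hγ a b
  have h2 := busemann_lipschitz γ hγ b a
  have h3 := dist_comm a b
  rw [abs_sub_le_iff]
  constructor <;> linarith

lemma exists_calibrated_point [ProperSpace M] (hM : IsGeodesicSpace M)
    (γ : ℝ → M) (hγ : IsLine γ) (x : M) :
    ∃ y : M, dist x y = 1 ∧ busemann γ y = busemann γ x - 1 := by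
  have happrox : ∀ n : ℕ, ∃ T : ℝ, 0 ≤ T ∧ 1 + dist x (γ 0) ≤ T ∧
      dist x (γ T) - T ≤ busemann γ x + 1/(n+1) := by
    intro n
    have hpos : busemann γ x < busemann γ x + 1/(n+1) := by
      have : (0:ℝ) < 1/(n+1) := by positivity
      linarith
    obtain ⟨⟨T₀, hT₀⟩, hT₀lt⟩ := exists_lt_of_ciInf_lt hpos
    refine ⟨max T₀ (1 + dist x (γ 0)), le_trans hT₀ (le_max_left _ _), le_max_right _ _, ?_⟩
    have hmono := busemann_antitone γ hγ x hT₀ (le_max_left T₀ (1 + dist x (γ 0)))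
    simp only [Set.mem_Ici] at hT₀
    exact le_trans hmono (le_of_lt (by exact hT₀lt))
  choose T hT0 hTlarge hTval using happrox
  have hD : ∀ n, 1 ≤ dist x (γ (T n)) := by
    intro n
    have h1 : dist (γ 0) (γ (T n)) = T n - 0 := dist_line γ hγ (hT0 n)
    have h2 := dist_triangle (γ 0) x (γ (T n))
    have h3 := dist_comm (γ 0) x
    linarith [hTlarge n]
  choose c hc0 hc1 hciso using fun n => hM x (γ (T n))
  set z : ℕ → M := fun n => c n 1 with hz
  have hdz : ∀ n, dist x (z n) = 1 := by
    intro n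
    have h := hciso n 0 1 ⟨le_rfl, dist_nonneg⟩ ⟨zero_le_one, hD n⟩
    rw [hc0 n] at h
    simpa using h
  have hup : ∀ n, busemann γ (z n) ≤ busemann γ x + 1/(n+1) - 1 := by
    intro n
    have hle := busemann_le γ hγ (z n) (hT0 n)
    have hiso := hciso n 1 (dist x (γ (T n))) ⟨zero_le_one, hD n⟩ ⟨dist_nonneg, le_rfl⟩
    rw [hc1 n] at hiso
    rw [abs_of_nonpos (by linarith [hD n])] at hiso
    have : dist (z n) (γ (T n)) = dist x (γ (T n)) - 1 := by rw [hiso]; ring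
    rw [this] at hle
    linarith [hTval n]
  have hlo : ∀ n, busemann γ x - 1 ≤ busemann γ (z n) := by
    intro n
    have := busemann_lipschitz γ hγ x (z n)
    linarith [hdz n]
  have hmem : ∀ n, z n ∈ Metric.closedBall x 1 := fun n => by
    rw [Metric.mem_closedBall, dist_comm, hdz n]
  obtain ⟨y, _, φ, hφ, hconv⟩ := (isCompact_closedBall x 1).tendsto_subseq hmem
  have hdcont : Tendsto (fun k => dist x (z (φ k))) atTop (𝓝 (dist x y)) :=
    ((continuous_const.dist continuous_id).tendsto y).comp hconv
  have hd1 : dist x y = 1 := by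
    have h1 : Tendsto (fun _ : ℕ => (1:ℝ)) atTop (𝓝 (dist x y)) := by
      simpa [hdz] using hdcont
    exact (tendsto_nhds_unique tendsto_const_nhds h1).symm
  refine ⟨y, hd1, ?_⟩
  have hcont := (busemann_lipschitzWith γ hγ).continuous
  have h1 : Tendsto (fun k => busemann γ (z (φ k))) atTop (𝓝 (busemann γ y)) :=
    (hcont.tendsto y).comp hconv
  have h2 : Tendsto (fun k => busemann γ (z (φ k))) atTop (𝓝 (busemann γ x - 1)) := by
    have hnul : Tendsto (fun k : ℕ => 1/((φ k : ℝ)+1)) atTop (𝓝 0) :=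
      tendsto_one_div_add_atTop_nhds_zero_nat.comp hφ.tendsto_atTop
    refine tendsto_of_tendsto_of_tendsto_of_le_of_le
      (g := fun _ : ℕ => busemann γ x - 1)
      (h := fun k : ℕ => busemann γ x + 1/((φ k : ℝ)+1) - 1)
      tendsto_const_nhds ?_ (fun k => hlo (φ k)) (fun k => hup (φ k))
    have := (tendsto_const_nhds (x := busemann γ x) (f := atTop (α := ℕ))).add hnul
    simpa using this.sub (tendsto_const_nhds (x := (1:ℝ)))
  exact tendsto_nhds_unique h1 h2


lemma geodesic_calibrated (γ : ℝ → M) (hγ : IsLine γ) {u v : M} {c : ℝ → M} {r s : ℝ}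
    (hs0 : 0 ≤ s) (hsr : s ≤ r) (hduv : dist u v = r) (hc0 : c 0 = u) (hcr : c r = v)
    (hiso : ∀ a b : ℝ, a ∈ Set.Icc 0 r → b ∈ Set.Icc 0 r → dist (c a) (c b) = |a - b|)
    (hcal : busemann γ v = busemann γ u - r) :
    busemann γ (c s) = busemann γ u - s := by
  have hr0 : 0 ≤ r := le_trans hs0 hsr
  have d1 : dist u (c s) = s := by
    have := hiso 0 s ⟨le_rfl, hr0⟩ ⟨hs0, hsr⟩
    rw [hc0] at this
    rw [this, abs_of_nonpos (by linarith)]; ring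
  have d2 : dist (c s) v = r - s := by
    have := hiso s r ⟨hs0, hsr⟩ ⟨hr0, le_rfl⟩
    rw [hcr] at this
    rw [this, abs_of_nonpos (by linarith)]; ring
  have le1 := busemann_lipschitz γ hγ (c s) v
  have ge1 := busemann_lipschitz γ hγ u (c s)
  rw [d2] at le1
  rw [d1] at ge1
  linarith

lemma exists_calibrated_ray [ProperSpace M] (hM : IsGeodesicSpace M)
    (γ : ℝ → M) (hγ : IsLine γ) (x : M) :
    ∃ σ : ℝ → M, σ 0 = x ∧ (∀ s t : ℝ, 0 ≤ s → 0 ≤ t → dist (σ s) (σ t) = |s - t|) ∧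
      (∀ t : ℝ, 0 ≤ t → busemann γ (σ t) = busemann γ x - t) := by
  choose f hf1 hf2 using fun z : M => exists_calibrated_point hM γ hγ z
  set y : ℕ → M := fun n => f^[n] x with hy
  have hy0 : y 0 = x := rfl
  have hysucc : ∀ n, y (n+1) = f (y n) := fun n => Function.iterate_succ_apply' f n x
  have hby : ∀ n : ℕ, busemann γ (y n) = busemann γ x - n := by
    intro n; induction n with
    | zero => simp [hy0]
    | succ n ih => rw [hysucc n, hf2 (y n), ih]; push_cast; ring
  have hdy : ∀ n, dist (y n) (y (n+1)) = 1 := fun n => by rw [hysucc n]; exact hf1 (y n)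
  choose c hc0 hc1 hciso using fun n => hM (y n) (y (n+1))
  have hc1' : ∀ n, c n 1 = y (n+1) := fun n => by
    have := hc1 n; rwa [hdy n] at this
  have hciso' : ∀ n, ∀ a b : ℝ, a ∈ Set.Icc (0:ℝ) 1 → b ∈ Set.Icc (0:ℝ) 1 →
      dist (c n a) (c n b) = |a - b| := fun n a b ha hb =>
    hciso n a b (by rw [hdy n]; exact ha) (by rw [hdy n]; exact hb)
  have hbseg : ∀ n : ℕ, ∀ s : ℝ, 0 ≤ s → s ≤ 1 →
      busemann γ (c n s) = busemann γ (y n) - s := by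
    intro n s hs0 hs1
    refine geodesic_calibrated γ hγ hs0 hs1 (hdy n) (hc0 n) (hc1' n) (hciso' n) ?_
    rw [hby n, hby (n+1)]; push_cast; ring
  refine ⟨fun t => c ⌊t⌋₊ (t - ⌊t⌋₊), ?_, ?_, ?_⟩
  · show c ⌊(0:ℝ)⌋₊ (0 - (⌊(0:ℝ)⌋₊ : ℝ)) = x
    rw [Nat.floor_zero]
    simpa using (hc0 0).trans hy0
  · -- distance property
    have key : ∀ t : ℝ, 0 ≤ t → busemann γ (c ⌊t⌋₊ (t - ⌊t⌋₊)) = busemann γ x - t := by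
      intro t ht
      have h1 : ((⌊t⌋₊ : ℝ)) ≤ t := Nat.floor_le ht
      have h2 : t < ⌊t⌋₊ + 1 := Nat.lt_floor_add_one t
      rw [hbseg ⌊t⌋₊ (t - ⌊t⌋₊) (by linarith) (by linarith), hby ⌊t⌋₊]
      ring
    have hychain : ∀ m n : ℕ, m ≤ n → dist (y m) (y n) ≤ (n:ℝ) - m := by
      intro m n h
      induction n, h using Nat.le_induction with
      | base => simp
      | succ k hk ih =>
        have := dist_triangle (y m) (y k) (y (k+1))
        have h2 := hdy k
        push_cast
        linarith
    have hupper : ∀ s t : ℝ, 0 ≤ s → s ≤ t →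
        dist (c ⌊s⌋₊ (s - ⌊s⌋₊)) (c ⌊t⌋₊ (t - ⌊t⌋₊)) ≤ t - s := by
      intro s t hs hst
      have ht : 0 ≤ t := le_trans hs hst
      have hns : ((⌊s⌋₊ : ℝ)) ≤ s := Nat.floor_le hs
      have hns' : s < ⌊s⌋₊ + 1 := Nat.lt_floor_add_one s
      have hmt : ((⌊t⌋₊ : ℝ)) ≤ t := Nat.floor_le ht
      have hmt' : t < ⌊t⌋₊ + 1 := Nat.lt_floor_add_one t
      have hnm : ⌊s⌋₊ ≤ ⌊t⌋₊ := Nat.floor_mono hst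
      rcases eq_or_lt_of_le hnm with heq | hlt
      · rw [heq] at hns hns' ⊢
        rw [hciso' ⌊t⌋₊ (s - ⌊t⌋₊) (t - ⌊t⌋₊) ⟨by linarith, by linarith⟩
          ⟨by linarith, by linarith⟩, abs_of_nonpos (by linarith)]
        linarith
      · have hlt' : (⌊s⌋₊ : ℝ) + 1 ≤ (⌊t⌋₊ : ℝ) := by exact_mod_cast hlt
        have e1 : dist (c ⌊s⌋₊ (s - ⌊s⌋₊)) (y (⌊s⌋₊ + 1)) = (⌊s⌋₊ + 1) - s := by
          have := hciso' ⌊s⌋₊ (s - ⌊s⌋₊) 1 ⟨by linarith, by linarith⟩ ⟨zero_le_one, le_rfl⟩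
          rw [hc1' ⌊s⌋₊] at this
          rw [this, abs_of_nonpos (by linarith)]; ring
        have e2 : dist (y ⌊t⌋₊) (c ⌊t⌋₊ (t - ⌊t⌋₊)) = t - ⌊t⌋₊ := by
          have := hciso' ⌊t⌋₊ 0 (t - ⌊t⌋₊) ⟨le_rfl, zero_le_one⟩ ⟨by linarith, by linarith⟩
          rw [hc0 ⌊t⌋₊] at this
          rw [this, abs_of_nonpos (by linarith)]; ring
        have e3 : dist (y (⌊s⌋₊ + 1)) (y ⌊t⌋₊) ≤ (⌊t⌋₊ : ℝ) - (⌊s⌋₊ + 1) := by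
          have := hychain (⌊s⌋₊ + 1) ⌊t⌋₊ hlt
          push_cast at this ⊢
          linarith
        have t1 := dist_triangle (c ⌊s⌋₊ (s - ⌊s⌋₊)) (y (⌊s⌋₊ + 1)) (c ⌊t⌋₊ (t - ⌊t⌋₊))
        have t2 := dist_triangle (y (⌊s⌋₊ + 1)) (y ⌊t⌋₊) (c ⌊t⌋₊ (t - ⌊t⌋₊))
        linarith
    have hlower : ∀ s t : ℝ, 0 ≤ s → s ≤ t →
        t - s ≤ dist (c ⌊s⌋₊ (s - ⌊s⌋₊)) (c ⌊t⌋₊ (t - ⌊t⌋₊)) := by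
      intro s t hs hst
      have ht : 0 ≤ t := le_trans hs hst
      have := busemann_lipschitz γ hγ (c ⌊s⌋₊ (s - ⌊s⌋₊)) (c ⌊t⌋₊ (t - ⌊t⌋₊))
      rw [key s hs, key t ht] at this
      linarith
    intro s t hs ht
    show dist (c ⌊s⌋₊ (s - ⌊s⌋₊)) (c ⌊t⌋₊ (t - ⌊t⌋₊)) = |s - t|
    rcases le_total s t with h | h
    · rw [abs_of_nonpos (by linarith)]
      have := le_antisymm (hupper s t hs h) (hlower s t hs h)
      linarith
    · rw [abs_of_nonneg (by linarith), dist_comm]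
      have := le_antisymm (hupper t s ht h) (hlower t s ht h)
      linarith
  · intro t ht
    have h1 : ((⌊t⌋₊ : ℝ)) ≤ t := Nat.floor_le ht
    have h2 : t < ⌊t⌋₊ + 1 := Nat.lt_floor_add_one t
    show busemann γ (c ⌊t⌋₊ (t - ⌊t⌋₊)) = busemann γ x - t
    rw [hbseg ⌊t⌋₊ (t - ⌊t⌋₊) (by linarith) (by linarith), hby ⌊t⌋₊]
    ring


lemma exists_calibrated_line [ProperSpace M] (hM : IsGeodesicSpace M)
    (γ : ℝ → M) (hγ : IsLine γ) (x : M)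
    (hx : busemann γ x + busemann (negRay γ) x = 0) :
    ∃ L : ℝ → M, IsLine L ∧ L 0 = x ∧ Prec L γ := by
  obtain ⟨σp, hp0, hpray, hpcal⟩ := exists_calibrated_ray hM γ hγ x
  obtain ⟨σm, hm0, hmray, hmcal⟩ :=
    exists_calibrated_ray hM (negRay γ) (isLine_negRay γ hγ) x
  set L : ℝ → M := fun t => if 0 ≤ t then σp t else σm (-t) with hLdef
  have hL0 : L 0 = x := by rw [hLdef]; simp [hp0]
  have hdistx : ∀ t : ℝ, dist (L t) x = |t| := by
    intro t
    rcases le_or_gt 0 t with ht | ht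
    · rw [hLdef]; simp only [if_pos ht]
      have := hpray t 0 ht le_rfl
      rw [hp0] at this
      rw [this, abs_of_nonneg ht]; simp [abs_of_nonneg ht]
    · rw [hLdef]; simp only [if_neg (not_le.mpr ht)]
      have := hmray (-t) 0 (by linarith) le_rfl
      rw [hm0] at this
      rw [this]
      rw [abs_of_nonneg (by linarith : (0:ℝ) ≤ -t - 0), abs_of_neg ht]
      ring
  have hvp : ∀ t : ℝ, busemann γ (L t) = busemann γ x - t := by
    intro t
    rcases le_or_gt 0 t with ht | ht
    · rw [hLdef]; simp only [if_pos ht]; exact hpcal t ht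
    · rw [hLdef]; simp only [if_neg (not_le.mpr ht)]
      refine le_antisymm ?_ ?_
      · have h1 := busemann_lipschitz γ hγ (σm (-t)) x
        have h2 : dist (σm (-t)) x = -t := by
          have := hmray (-t) 0 (by linarith) le_rfl
          rw [hm0] at this
          rw [this, abs_of_nonneg (by linarith : (0:ℝ) ≤ -t - 0)]; ring
        rw [h2] at h1; linarith
      · have h1 := barrier_nonneg (negRay γ) (isLine_negRay γ hγ) (σm (-t))
        have h2 := hmcal (-t) (by linarith)
        -- h1 : 0 ≤ busemann (negRay γ) (σm (-t)) + busemann (negRay (negRay γ)) (σm (-t))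
        have h3 : negRay (negRay γ) = γ := by funext u; simp [negRay]
        rw [h3] at h1
        linarith
  have hvm : ∀ t : ℝ, busemann (negRay γ) (L t) = busemann (negRay γ) x + t := by
    intro t
    rcases le_or_gt 0 t with ht | ht
    · rw [hLdef]; simp only [if_pos ht]
      refine le_antisymm ?_ ?_
      · have h1 := busemann_lipschitz (negRay γ) (isLine_negRay γ hγ) (σp t) x
        have h2 : dist (σp t) x = t := by
          have := hpray t 0 ht le_rfl
          rw [hp0] at this
          rw [this, abs_of_nonneg (by linarith : (0:ℝ) ≤ t - 0)]; ring
        rw [h2] at h1; linarith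
      · have h1 := barrier_nonneg γ hγ (σp t)
        have h2 := hpcal t ht
        linarith
    · rw [hLdef]; simp only [if_neg (not_le.mpr ht)]
      have := hmcal (-t) (by linarith)
      rw [this]; ring
  have haux : ∀ s t : ℝ, s ≤ t → dist (L s) (L t) = t - s := by
    intro s t hst
    refine le_antisymm ?_ ?_
    · rcases le_or_gt 0 s with hs | hs
      · rw [hLdef]; simp only [if_pos hs, if_pos (le_trans hs hst)]
        rw [hpray s t hs (le_trans hs hst), abs_of_nonpos (by linarith)]; ring_nf; rfl
      · rcases le_or_gt 0 t with ht | ht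
        · have h1 := dist_triangle (L s) x (L t)
          have h2 := hdistx s
          have h3 := hdistx t
          rw [dist_comm x (L t)] at h1
          rw [abs_of_neg hs] at h2
          rw [abs_of_nonneg ht] at h3
          linarith
        · rw [hLdef]
          simp only [if_neg (not_le.mpr hs), if_neg (not_le.mpr ht)]
          rw [hmray (-s) (-t) (by linarith) (by linarith),
            abs_of_nonneg (by linarith : (0:ℝ) ≤ -s - -t)]
          ring_nf; rfl
    · have h1 := busemann_lipschitz γ hγ (L s) (L t)
      rw [hvp s, hvp t] at h1
      linarith
  have hLline : IsLine L := by
    intro s t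
    rcases le_total s t with h | h
    · rw [haux s t h, abs_of_nonpos (by linarith)]; ring
    · rw [dist_comm, haux t s h, abs_of_nonneg (by linarith)]
  refine ⟨L, hLline, hL0, ?_, fun t => ⟨?_, ?_⟩⟩
  · rw [hL0]; exact hx
  · rw [hvp t, hL0]
  · rw [hvm t, hL0]

end Construction


/-- for lines `γ₁ ≺ γ` and `γ₂ ≺ γ` (with `γ` having the uniqueness
property in a proper geodesic space), `B_{γ₁} ≥ B_{γ₂}` implies `γ₁ ≺ γ₂`. -/
theorem prec_of_barrier_ge [ProperSpace M] (hM : IsGeodesicSpace M)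
    (γ : ℝ → M) (hγ : IsLine γ) (huniq : HasUniqueCalibLine γ)
    (γ₁ γ₂ : ℝ → M) (h₁ : IsLine γ₁) (h₂ : IsLine γ₂)
    (hp₁ : Prec γ₁ γ) (hp₂ : Prec γ₂ γ)
    (hge : ∀ x : M, barrier γ₂ x ≤ barrier γ₁ x) :
    Prec γ₁ γ₂ := by
  have hself : barrier γ₁ (γ₁ 0) = 0 := barrier_self γ₁ h₁ 0
  have hnn2 := barrier_nonneg γ₂ h₂ (γ₁ 0)
  have hbar2 : busemann γ₂ (γ₁ 0) + busemann (negRay γ₂) (γ₁ 0) = 0 := by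
    have h2 := hge (γ₁ 0)
    rw [hself] at h2
    exact le_antisymm h2 hnn2
  obtain ⟨L, hLline, hL0, hLprec⟩ := exists_calibrated_line hM γ₂ h₂ (γ₁ 0) hbar2
  have hb2L : ∀ t : ℝ, busemann γ₂ (L t) = busemann γ₂ (γ₁ 0) - t := fun t => by
    have := (hLprec.2 t).1; rwa [hL0] at this
  have hb2L' : ∀ t : ℝ, busemann (negRay γ₂) (L t) =
      busemann (negRay γ₂) (γ₁ 0) + t := fun t => by
    have := (hLprec.2 t).2; rwa [hL0] at this
  set C := busemann γ (γ₂ 0) with hC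
  set C' := busemann (negRay γ) (γ₂ 0) with hC'
  have h12p : ∀ z : M, busemann γ z ≤ C + busemann γ₂ z := by
    intro z
    have key : busemann γ z - C ≤ busemann γ₂ z := by
      refine le_busemann γ₂ z fun t ht => ?_
      have hlip := busemann_lipschitz γ hγ z (γ₂ t)
      have hcal := (hp₂.2 t).1
      linarith
    linarith
  have h12m : ∀ z : M, busemann (negRay γ) z ≤ C' + busemann (negRay γ₂) z := by
    intro z
    have key : busemann (negRay γ) z - C' ≤ busemann (negRay γ₂) z := by
      refine le_busemann (negRay γ₂) z fun t ht => ?_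
      have hlip := busemann_lipschitz (negRay γ) (isLine_negRay γ hγ) z (γ₂ (-t))
      have hcal := (hp₂.2 (-t)).2
      show _ ≤ dist z (γ₂ (-t)) - t
      linarith
    linarith
  have hCC' : C + C' = 0 := hp₂.1
  have hL_a : ∀ t : ℝ, busemann γ (L t) = (C + busemann γ₂ (γ₁ 0)) - t := by
    intro t
    have ha := h12p (L t); rw [hb2L t] at ha
    have hb := h12m (L t); rw [hb2L' t] at hb
    have hnn := barrier_nonneg γ hγ (L t)
    linarith
  have hL_b : ∀ t : ℝ, busemann (negRay γ) (L t) =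
      (C' + busemann (negRay γ₂) (γ₁ 0)) + t := by
    intro t
    have ha := h12p (L t); rw [hb2L t] at ha
    have hb := h12m (L t); rw [hb2L' t] at hb
    have hnn := barrier_nonneg γ hγ (L t)
    linarith
  have hPrecLγ : Prec L γ := by
    refine ⟨?_, fun t => ⟨?_, ?_⟩⟩
    · rw [hL_a 0, hL_b 0]; linarith
    · rw [hL_a t, hL_a 0]; ring
    · rw [hL_b t, hL_b 0]; ring
  have heq : γ₁ = L := huniq (γ₁ 0) hp₁.1 γ₁ L h₁ hLline rfl hL0 hp₁ hPrecLγ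
  rw [heq]
  exact hLprec
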